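/- arXiv:1208.1718 — 4 statements merged into one kernel-verified Lean document; each statement's English description precedes it below -/
import Mathlib

section
/- For any strategy profile σ* in a finite two-player normal form game, there exist preplay offers from each player to the other (of sufficiently large amounts contingent on the other player playing their component of σ*) such that in the resulting transformed game, σ* is a strictly dominant strategy equilibrium. -/
/-- in any finite two-player game, for any strategy profile σ*,
there are sufficiently large offers from each player to the other (contingent
on the other playing their component of σ*) making σ* a strictly dominant
strategy equilibrium of the transformed game. -/
theorem exists_offers_making_strictly_dominant
    {SA SB : Type*} [Fintype SA] [Fintype SB] [DecidableEq SA] [DecidableEq SB]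
    (uA uB : SA → SB → ℝ) (aStar : SA) (bStar : SB) :
    ∃ α β : ℝ, 0 ≤ α ∧ 0 ≤ β ∧
      -- transformed payoffs
      (let uA' : SA → SB → ℝ := fun a b =>
          uA a b - α * (if b = bStar then 1 else 0) + β * (if a = aStar then 1 else 0);
       let uB' : SA → SB → ℝ := fun a b =>
          uB a b + α * (if b = bStar then 1 else 0) - β * (if a = aStar then 1 else 0);
       (∀ a : SA, a ≠ aStar → ∀ b : SB, uA' a b < uA' aStar b) ∧
       (∀ b : SB, b ≠ bStar → ∀ a : SA, uB' a b < uB' a bStar)) := by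
  have hA : Nonempty SA := ⟨aStar⟩
  have hB : Nonempty SB := ⟨bStar⟩
  set α : ℝ := 1 + max 0 (Finset.sup' Finset.univ Finset.univ_nonempty
    (fun p : SA × SB => uB p.1 p.2 - uB p.1 bStar)) with hα
  set β : ℝ := 1 + max 0 (Finset.sup' Finset.univ Finset.univ_nonempty
    (fun p : SA × SB => uA p.1 p.2 - uA aStar p.2)) with hβ
  have hαb : ∀ a b, uB a b - uB a bStar < α := by
    intro a b
    have := Finset.le_sup' (fun p : SA × SB => uB p.1 p.2 - uB p.1 bStar)
      (Finset.mem_univ (a, b))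
    calc uB a b - uB a bStar ≤ _ := this
      _ ≤ max 0 _ := le_max_right _ _
      _ < α := by rw [hα]; linarith
  have hβa : ∀ a b, uA a b - uA aStar b < β := by
    intro a b
    have := Finset.le_sup' (fun p : SA × SB => uA p.1 p.2 - uA aStar p.2)
      (Finset.mem_univ (a, b))
    calc uA a b - uA aStar b ≤ _ := this
      _ ≤ max 0 _ := le_max_right _ _
      _ < β := by rw [hβ]; linarith
  refine ⟨α, β, ?_, ?_, ?_, ?_⟩
  · rw [hα]; have := le_max_left 0 (Finset.sup' Finset.univ Finset.univ_nonempty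
      (fun p : SA × SB => uB p.1 p.2 - uB p.1 bStar)); linarith
  · rw [hβ]; have := le_max_left 0 (Finset.sup' Finset.univ Finset.univ_nonempty
      (fun p : SA × SB => uA p.1 p.2 - uA aStar p.2)); linarith
  · intro a ha b
    simp only [if_neg ha, if_pos rfl]
    by_cases hb : b = bStar <;> simp [hb] <;> linarith [hβa a bStar, hβa a b]
  · intro b hb a
    simp only [if_neg hb, if_pos rfl]
    by_cases ha : a = aStar <;> simp [ha] <;> linarith [hαb aStar b, hαb a b]
end

section
/- Let G be a finite two-player game, B_j a strategy of B, and A_i a best response of A to B_j. Then the minimal payment δ = max_k (u_B(A_i, B_k) − u_B(A_i, B_j)) from A to B contingent on B playing B_j makes B_j a best response of B to A_i in the transformed game; moreover, for every ε > 0, the offer of δ + ε makes (A_i, B_j) a strict Nash equilibrium of the transformed game provided A_i is the unique best response of A to B_j in G. -/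
/-- if A_i is a best response of A to B_j and
δ = max_k (u_B(A_i,B_k) − u_B(A_i,B_j)), then the offer A →(δ/B_j) B makes
B_j a best response of B to A_i in the transformed game; moreover for every
ε > 0 the offer δ + ε makes (A_i,B_j) a strict Nash equilibrium of the
transformed game, provided A_i is the unique best response of A to B_j. -/
theorem minimal_offer_makes_best_response
    {SA SB : Type*} [Fintype SB] [Nonempty SB] [DecidableEq SB]
    (uA uB : SA → SB → ℝ) (Ai : SA) (Bj : SB)
    (hBR : ∀ a : SA, uA a Bj ≤ uA Ai Bj) :
    let δ : ℝ := Finset.univ.sup' Finset.univ_nonempty (fun k : SB => uB Ai k - uB Ai Bj)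
    -- δ makes B_j a best response of B to A_i in the transformed game
    (∀ b : SB, uB Ai b + δ * (if b = Bj then 1 else 0)
        ≤ uB Ai Bj + δ * (if (Bj : SB) = Bj then 1 else 0)) ∧
    -- for every ε > 0, with the offer δ + ε, (A_i, B_j) is a strict NE,
    -- provided A_i is A's unique best response to B_j
    (∀ ε : ℝ, 0 < ε →
      (∀ a : SA, a ≠ Ai → uA a Bj < uA Ai Bj) →
      ((∀ a : SA, a ≠ Ai →
          uA a Bj - (δ + ε) * (if (Bj : SB) = Bj then 1 else 0)
            < uA Ai Bj - (δ + ε) * (if (Bj : SB) = Bj then 1 else 0)) ∧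
       (∀ b : SB, b ≠ Bj →
          uB Ai b + (δ + ε) * (if b = Bj then 1 else 0)
            < uB Ai Bj + (δ + ε) * (if (Bj : SB) = Bj then 1 else 0)))) := by
  intro δ
  have hδ : ∀ b : SB, uB Ai b - uB Ai Bj ≤ δ := fun b =>
    Finset.le_sup' (fun k : SB => uB Ai k - uB Ai Bj) (Finset.mem_univ b)
  constructor
  · intro b
    by_cases hb : b = Bj
    · simp [hb]
    · simp only [hb, if_true, if_false, mul_one, mul_zero, add_zero]
      have := hδ b
      linarith
  · intro ε hε hU
    constructor
    · intro a ha
      simp only [if_pos rfl, mul_one]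
      have := hU a ha
      linarith
    · intro b hb
      rw [if_pos rfl, if_neg hb]; simp only [mul_one, mul_zero, add_zero]
      have := hδ b
      linarith
end

section
/- In an extensive game with perfect information and finite horizon, a strategy profile is a subgame perfect equilibrium if and only if it satisfies the one-deviation property: no player can strictly improve their payoff in any subgame by deviating from the profile only at the first move of that subgame (i.e., changing the action at the root of the subgame while conforming thereafter). -/
namespace Stmt12

/- An extensive game with perfect information and finite horizon `n`:
histories are lists of actions of length ≤ n, terminal histories are those of
length n, `turn` assigns the player to move at each non-terminal history, and
`payoff` gives each player's payoff at terminal histories.  A strategy profile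
is a function assigning an action to every (non-terminal) history; player i's
part of it is its restriction to the histories where `turn` is i. -/

variable {P A : Type}

/-- The play generated from a history by a profile, with explicit fuel. -/
def playFuel (s : List A → A) : ℕ → List A → List A
  | 0, h => h
  | k + 1, h => playFuel s k (h ++ [s h])

/-- The terminal history reached from history `h` when everybody follows the
profile `s`, in the game of horizon `n`. -/
def play (n : ℕ) (s : List A → A) (h : List A) : List A :=
  playFuel s (n - h.length) h

/-- `t` is a deviation of player `i` from profile `s`: it agrees with `s`
at every history not owned by `i`. -/
def IsDeviation (turn : List A → P) (i : P) (s t : List A → A) : Prop :=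
  ∀ h : List A, turn h ≠ i → t h = s h

/-- `s` is a subgame perfect equilibrium: in the subgame rooted at any
history, no player can strictly improve by any deviation. -/
def IsSPE (n : ℕ) (turn : List A → P) (payoff : P → List A → ℝ)
    (s : List A → A) : Prop :=
  ∀ h : List A, h.length ≤ n → ∀ i : P, ∀ t : List A → A,
    IsDeviation turn i s t → payoff i (play n t h) ≤ payoff i (play n s h)

/-- `s` satisfies the one-deviation property: at the root of any subgame, the
player to move cannot strictly improve by changing only the action there and
conforming to `s` thereafter. -/
def OneDeviation (n : ℕ) (turn : List A → P) (payoff : P → List A → ℝ)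
    (s : List A → A) : Prop :=
  ∀ h : List A, h.length < n → ∀ a : A,
    payoff (turn h) (play n s (h ++ [a])) ≤ payoff (turn h) (play n s h)

lemma playFuel_congr (s t : List A → A) :
    ∀ (k : ℕ) (g : List A), (∀ g' : List A, g.length ≤ g'.length → t g' = s g') →
      playFuel t k g = playFuel s k g := by
  intro k
  induction k with
  | zero => intro g _; rfl
  | succ k ih =>
    intro g hg
    simp only [playFuel]
    rw [hg g le_rfl]
    exact ih (g ++ [s g]) (fun g' hg' => hg g' (by simp at hg'; omega))

lemma play_step (n : ℕ) (s : List A → A) (h : List A) (hl : h.length < n) :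
    play n s h = play n s (h ++ [s h]) := by
  unfold play
  have : n - h.length = (n - (h ++ [s h]).length) + 1 := by simp; omega
  rw [this]
  rfl

/-- in a finite-horizon extensive game with perfect
information, a strategy profile is a subgame perfect equilibrium iff it
satisfies the one-deviation property. -/
theorem spe_iff_one_deviation (n : ℕ) (turn : List A → P)
    (payoff : P → List A → ℝ) (s : List A → A) :
    IsSPE n turn payoff s ↔ OneDeviation n turn payoff s := by
  constructor
  · intro hspe h hl a
    classical
    set t : List A → A := fun g => if g = h then a else s g with ht
    have hdev : IsDeviation turn (turn h) s t := by
      intro g hg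
      simp only [ht]
      rw [if_neg]
      rintro rfl; exact hg rfl
    have hplay : play n t h = play n s (h ++ [a]) := by
      unfold play
      have : n - h.length = (n - (h ++ [a]).length) + 1 := by simp; omega
      rw [this]
      show playFuel t (n - (h ++ [a]).length) (h ++ [t h]) = _
      have : t h = a := by simp [ht]
      rw [this]
      exact playFuel_congr s t _ (h ++ [a]) (fun g' hg' => by
        simp only [ht]
        rw [if_neg]
        rintro rfl; simp at hg')
    have := hspe h (le_of_lt hl) (turn h) t hdev
    rwa [hplay] at this
  · intro hod
    -- key induction on fuel
    have key : ∀ (k : ℕ) (h : List A), n ≤ h.length + k →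
        ∀ (i : P) (t : List A → A), IsDeviation turn i s t →
          payoff i (play n t h) ≤ payoff i (play n s h) := by
      intro k
      induction k with
      | zero =>
        intro h hn i t _
        have h0 : n - h.length = 0 := by omega
        unfold play
        rw [h0]
        exact le_rfl
      | succ k ih =>
        intro h hn i t hdev
        by_cases hl : h.length < n
        · have hstep : play n t h = play n t (h ++ [t h]) := by
            unfold play
            have : n - h.length = (n - (h ++ [t h]).length) + 1 := by simp; omega
            rw [this]; rfl
          have h1 : payoff i (play n t (h ++ [t h])) ≤ payoff i (play n s (h ++ [t h])) :=
            ih (h ++ [t h]) (by simp; omega) i t hdev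
          by_cases hturn : turn h = i
          · have h2 : payoff (turn h) (play n s (h ++ [t h])) ≤
                payoff (turn h) (play n s h) := hod h hl (t h)
            rw [hturn] at h2
            calc payoff i (play n t h) = payoff i (play n t (h ++ [t h])) := by rw [hstep]
              _ ≤ payoff i (play n s (h ++ [t h])) := h1
              _ ≤ payoff i (play n s h) := h2
          · have hts : t h = s h := hdev h hturn
            calc payoff i (play n t h) = payoff i (play n t (h ++ [t h])) := by rw [hstep]
              _ ≤ payoff i (play n s (h ++ [t h])) := h1
              _ = payoff i (play n s h) := by rw [hts, ← play_step n s h hl]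
        · have h0 : n - h.length = 0 := by omega
          unfold play
          rw [h0]
          exact le_rfl
    intro h hl i t hdev
    exact key (n - h.length) h (by omega) i t hdev

end Stmt12
end

section
/- In the 2×3 game with payoffs R1: (2,10),(10,4),(5,1) and R2: (6,0),(4,4),(6,3), for any ε with 0 < ε < 1, after the offers R →(1+ε / C3) C, then C →(4+ε / R1) R, then R →(6+ε / C2) C, the final transformed game has (R1,C2) as a strictly dominant strategy equilibrium with payoffs (8, 6). -/
namespace Stmt15

def uR : Fin 2 → Fin 3 → ℝ := !![2, 10, 5; 6, 4, 6]
def uC : Fin 2 → Fin 3 → ℝ := !![10, 4, 1; 0, 4, 3]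

noncomputable def uR' (ε : ℝ) (r : Fin 2) (c : Fin 3) : ℝ :=
  uR r c - (1 + ε) * (if c = 2 then 1 else 0)
         + (4 + ε) * (if r = 0 then 1 else 0)
         - (6 + ε) * (if c = 1 then 1 else 0)

noncomputable def uC' (ε : ℝ) (r : Fin 2) (c : Fin 3) : ℝ :=
  uC r c + (1 + ε) * (if c = 2 then 1 else 0)
         - (4 + ε) * (if r = 0 then 1 else 0)
         + (6 + ε) * (if c = 1 then 1 else 0)

/-- for any 0 < ε < 1, the final transformed game has (R1,C2)
as a strictly dominant strategy equilibrium with payoffs (8,6). -/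
theorem final_game_strictly_dominant (ε : ℝ) (h0 : 0 < ε) (h1 : ε < 1) :
    (∀ r : Fin 2, r ≠ 0 → ∀ c : Fin 3, uR' ε r c < uR' ε 0 c) ∧
    (∀ c : Fin 3, c ≠ 1 → ∀ r : Fin 2, uC' ε r c < uC' ε r 1) ∧
    uR' ε 0 1 = 8 ∧ uC' ε 0 1 = 6 := by
  refine ⟨?_, ?_, ?_, ?_⟩
  · intro r hr c
    fin_cases r <;> simp_all <;> fin_cases c <;>
      simp [uR', uR, Matrix.cons_val_zero, Matrix.cons_val_one] <;> try linarith
  · intro c hc r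
    fin_cases c <;> simp_all <;> fin_cases r <;>
      simp [uC', uC, Matrix.cons_val_zero, Matrix.cons_val_one] <;> try linarith
  · norm_num [uR', uR, Fin.ext_iff]; ring
  · norm_num [uC', uC, Fin.ext_iff]
end Stmt15
end
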